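/- Let X be a normal n×n complex matrix that factors as X = B C with B, C Hermitian, and suppose B and C are such that C X is Hermitian (which holds automatically when X = BC with B, C Hermitian and C X = C B C). If moreover B and C are positive semidefinite with C invertible, then X is Hermitian and B C = C B. -/

import Mathlib

open ComplexOrder Matrix

variable {n : Type*} [Fintype n] [DecidableEq n]

open scoped Classical in
/-- The positive semidefinite square root (junk value `0` if the input is not PSD). -/
noncomputable def psqrt (A : Matrix n n ℂ) : Matrix n n ℂ :=
  if h : A.PosSemidef then h.1.eigenvectorUnitary.1 * diagonal ((↑) ∘ (√·) ∘ h.1.eigenvalues) *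
    (star h.1.eigenvectorUnitary : Matrix n n ℂ) else 0

/-- The quantum fidelity product `a * b = (b^(1/2) a b^(1/2))^(1/2)`. -/
noncomputable def fid (a b : Matrix n n ℂ) : Matrix n n ℂ :=
  psqrt (psqrt b * a * psqrt b)

lemma aux_trace_zero (A : Matrix n n ℂ) (h : (Aᴴ * A).trace = 0) : A = 0 := by
  have h1 : ∑ j, ∑ i, Complex.normSq (A i j) = 0 := by
    have h2 : (Aᴴ * A).trace = ((∑ j, ∑ i, Complex.normSq (A i j) : ℝ) : ℂ) := by
      simp only [Matrix.trace, Matrix.diag, Matrix.mul_apply, Matrix.conjTranspose_apply]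
      push_cast
      refine Finset.sum_congr rfl fun j _ => Finset.sum_congr rfl fun i _ => ?_
      rw [Complex.star_def, ← Complex.normSq_eq_conj_mul_self]
    rw [h2] at h
    exact_mod_cast h
  ext i j
  have := (Finset.sum_eq_zero_iff_of_nonneg (fun j _ => Finset.sum_nonneg
    (fun i _ => Complex.normSq_nonneg _))).mp h1 j (Finset.mem_univ j)
  have := (Finset.sum_eq_zero_iff_of_nonneg (fun i _ => Complex.normSq_nonneg _)).mp
    this i (Finset.mem_univ i)
  simpa using Complex.normSq_eq_zero.mp this

open scoped MatrixOrder in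
lemma aux_psd_sqrt (A : Matrix n n ℂ) (hA : A.PosSemidef) :
    ∃ S : Matrix n n ℂ, S.PosSemidef ∧ S * S = A :=
  ⟨CFC.sqrt A, (CFC.sqrt_nonneg A).posSemidef, CFC.sqrt_mul_sqrt_self A hA.nonneg⟩

theorem stmt10 (X B C : Matrix n n ℂ) (hX : X = B * C)
    (hB : B.IsHermitian) (hC : C.IsHermitian)
    (hnormal : X * Xᴴ = Xᴴ * X) (hCX : (C * X).IsHermitian)
    (hBp : B.PosSemidef) (hCp : C.PosSemidef) (hCu : IsUnit C) :
    X.IsHermitian ∧ B * C = C * B := by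
  have hXH : Xᴴ = C * B := by rw [hX, conjTranspose_mul, hB.eq, hC.eq]
  have hn : B * C * (C * B) = C * B * (B * C) := by rw [hXH, hX] at hnormal; exact hnormal
  suffices hcomm : B * C = C * B by
    refine ⟨?_, hcomm⟩
    show Xᴴ = X
    rw [hXH, hX, hcomm]
  -- square root of C (made opaque)
  obtain ⟨S, hSps, hS2⟩ : ∃ S : Matrix n n ℂ, S.PosSemidef ∧ S * S = C :=
    aux_psd_sqrt C hCp
  have hSH : Sᴴ = S := hSps.1
  have hSu : IsUnit S := by
    have h1 : IsUnit (S * S) := hS2 ▸ hCu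
    rw [Matrix.isUnit_iff_isUnit_det] at h1 ⊢
    rw [Matrix.det_mul] at h1
    exact isUnit_of_mul_isUnit_left h1
  have : Invertible C := hCu.invertible
  obtain ⟨M, hMdef⟩ : ∃ M : Matrix n n ℂ, M = S * B * S := ⟨_, rfl⟩
  have hMH : M.IsHermitian := by
    show Mᴴ = M
    rw [hMdef, conjTranspose_mul, conjTranspose_mul, hSH, hB.eq, Matrix.mul_assoc]
  obtain ⟨V, hVdef⟩ : ∃ V : Matrix n n ℂ, V = ⅟C * (M * C) := ⟨_, rfl⟩
  -- helper cancellation lemmas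
  have hCc : ∀ Y : Matrix n n ℂ, C * (⅟C * Y) = Y := fun Y => by
    rw [← Matrix.mul_assoc, mul_invOf_self, Matrix.one_mul]
  have hCS : C * S = S * C := by rw [← hS2, Matrix.mul_assoc]
  have hCS' : ∀ Y : Matrix n n ℂ, C * (S * Y) = S * (C * Y) := fun Y => by
    rw [← Matrix.mul_assoc, hCS, Matrix.mul_assoc]
  have hSiS' : ∀ Y : Matrix n n ℂ, S * (⅟C * (S * Y)) = Y := fun Y => by
    apply hSu.mul_left_cancel
    calc S * (S * (⅟C * (S * Y))) = C * (⅟C * (S * Y)) := by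
          rw [← Matrix.mul_assoc, hS2]
      _ = S * Y := hCc _
  -- key: M commutes with V = C⁻¹ M C   (normality)
  have hb : M * V = V * M := by
    apply hCu.mul_left_cancel
    have e1 : C * (M * V) = C * (S * (B * (B * (S * C)))) := by
      rw [hMdef, hVdef, hMdef]
      simp only [Matrix.mul_assoc]
      rw [hSiS']
    have e2 : C * (V * M) = S * (B * (S * (C * (S * (B * S))))) := by
      rw [hMdef, hVdef, hMdef]
      simp only [Matrix.mul_assoc]
      rw [hCc]
    rw [e1, e2]
    rw [← hS2] at hn ⊢
    simp only [Matrix.mul_assoc] at hn ⊢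
    calc S * (S * (S * (B * (B * (S * (S * S)))))) 
        = S * ((S * (S * (B * (B * (S * S))))) * S) := by simp only [Matrix.mul_assoc]
      _ = S * ((B * (S * (S * (S * (S * B))))) * S) := by rw [← hn]
      _ = S * (B * (S * (S * (S * (S * (B * S)))))) := by simp only [Matrix.mul_assoc]
  -- spectral decomposition of M
  set U : Matrix n n ℂ := (hMH.eigenvectorUnitary : Matrix n n ℂ) with hUdef
  set d : n → ℝ := hMH.eigenvalues with hddef
  set D : Matrix n n ℂ := diagonal (RCLike.ofReal ∘ d) with hDdef
  have hUU : star U * U = 1 := UnitaryGroup.star_mul_self _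
  have hUU' : U * star U = 1 := (Matrix.mem_unitaryGroup_iff).mp hMH.eigenvectorUnitary.2
  have hUl : ∀ Y : Matrix n n ℂ, U * (star U * Y) = Y := fun Y => by
    rw [← Matrix.mul_assoc, hUU', Matrix.one_mul]
  have hUl' : ∀ Y : Matrix n n ℂ, star U * (U * Y) = Y := fun Y => by
    rw [← Matrix.mul_assoc, hUU, Matrix.one_mul]
  have hMD : star U * M * U = D := by
    have := hMH.conjStarAlgAut_star_eigenvectorUnitary
    rwa [Unitary.conjStarAlgAut_star_apply] at this
  obtain ⟨C', hC'def⟩ : ∃ C' : Matrix n n ℂ, C' = star U * C * U := ⟨_, rfl⟩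
  obtain ⟨W, hWdef⟩ : ∃ W : Matrix n n ℂ, W = star U * V * U := ⟨_, rfl⟩
  have hDW : D * W = W * D := by
    rw [← hMD, hWdef]
    calc star U * M * U * (star U * V * U) = star U * (M * (V * U)) := by
          simp only [Matrix.mul_assoc]; rw [hUl]
      _ = star U * ((M * V) * U) := by simp only [Matrix.mul_assoc]
      _ = star U * ((V * M) * U) := by rw [hb]
      _ = star U * V * U * (star U * M * U) := by
          simp only [Matrix.mul_assoc]; rw [hUl]
  have hR1 : C' * W = D * C' := by
    rw [← hMD, hWdef, hC'def]
    calc star U * C * U * (star U * V * U) = star U * (C * (V * U)) := by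
          simp only [Matrix.mul_assoc]; rw [hUl]
      _ = star U * ((C * V) * U) := by simp only [Matrix.mul_assoc]
      _ = star U * ((M * C) * U) := by rw [hVdef, hCc]
      _ = star U * M * U * (star U * C * U) := by
          simp only [Matrix.mul_assoc]; rw [hUl]
  -- entrywise analysis
  obtain ⟨Z, hZdef⟩ : ∃ Z : Matrix n n ℂ, Z = W - D := ⟨_, rfl⟩
  have hW0 : ∀ i j, d i ≠ d j → W i j = 0 := by
    intro i j hij
    have h1 : (D * W) i j = (W * D) i j := by rw [hDW]
    rw [hDdef, Matrix.diagonal_mul, Matrix.mul_diagonal] at h1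
    simp only [Function.comp_apply] at h1
    have h2 : ((RCLike.ofReal (d i) : ℂ) - RCLike.ofReal (d j)) * W i j = 0 := by
      rw [sub_mul, h1]; ring
    rcases mul_eq_zero.mp h2 with h3 | h3
    · exact absurd (RCLike.ofReal_inj.mp (sub_eq_zero.mp h3)) hij
    · exact h3
  have hZ0 : ∀ i j, d i ≠ d j → Z i j = 0 := by
    intro i j hij
    have hne : i ≠ j := fun h => hij (h ▸ rfl)
    rw [hZdef, Matrix.sub_apply, hW0 i j hij, hDdef, Matrix.diagonal_apply_ne _ hne, sub_zero]
  have hK0 : ∀ i j, d i = d j → (C' * Z) i j = 0 := by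
    intro i j hij
    have h1 : C' * Z = D * C' - C' * D := by
      rw [hZdef, Matrix.mul_sub, hR1]
    rw [h1, Matrix.sub_apply, hDdef, Matrix.diagonal_mul, Matrix.mul_diagonal]
    simp only [Function.comp_apply, hij]
    ring
  -- trace argument
  have hC'p : C'.PosSemidef := by
    rw [hC'def, Matrix.star_eq_conjTranspose]
    exact hCp.conjTranspose_mul_mul_same U
  obtain ⟨R, hRps, hR2⟩ : ∃ R : Matrix n n ℂ, R.PosSemidef ∧ R * R = C' :=
    aux_psd_sqrt C' hC'p
  have hRH : Rᴴ = R := hRps.1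
  have htr : ((R * Z)ᴴ * (R * Z)).trace = 0 := by
    have h1 : (R * Z)ᴴ * (R * Z) = Zᴴ * (C' * Z) := by
      rw [conjTranspose_mul, hRH]
      calc Zᴴ * R * (R * Z) = Zᴴ * ((R * R) * Z) := by simp only [Matrix.mul_assoc]
        _ = Zᴴ * (C' * Z) := by rw [hR2]
    rw [h1, Matrix.trace]
    apply Finset.sum_eq_zero
    intro j _
    rw [Matrix.diag_apply, Matrix.mul_apply]
    apply Finset.sum_eq_zero
    intro i _
    rw [Matrix.conjTranspose_apply]
    by_cases hd : d i = d j
    · rw [hK0 i j hd, mul_zero]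
    · rw [hZ0 i j hd, star_zero, zero_mul]
  have hRZ : R * Z = 0 := aux_trace_zero _ htr
  have hRu : IsUnit R := by
    have hdet1 : (star U).det * U.det = 1 := by
      rw [← Matrix.det_mul, hUU, Matrix.det_one]
    have hC'u : IsUnit C' := by
      rw [hC'def, Matrix.isUnit_iff_isUnit_det, Matrix.det_mul, Matrix.det_mul]
      exact ((IsUnit.of_mul_eq_one _ hdet1).mul
        (Matrix.isUnit_iff_isUnit_det C |>.mp hCu)).mul
        (IsUnit.of_mul_eq_one _ (by rwa [mul_comm] at hdet1))
    have h1 : IsUnit (R * R) := hR2 ▸ hC'u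
    rw [Matrix.isUnit_iff_isUnit_det] at h1 ⊢
    rw [Matrix.det_mul] at h1
    exact isUnit_of_mul_isUnit_left h1
  have hZz : Z = 0 := hRu.mul_left_cancel (by rw [hRZ, Matrix.mul_zero])
  have hWD : W = D := by rwa [hZdef, sub_eq_zero] at hZz
  have hC'D : C' * D = D * C' := by rw [← hR1, hWD]
  -- back to M and C
  have hMC : M * C = C * M := by
    have h1 : star U * (M * C) * U = star U * (C * M) * U := by
      calc star U * (M * C) * U = (star U * M * U) * (star U * C * U) := by
            simp only [Matrix.mul_assoc]; rw [hUl]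
        _ = D * C' := by rw [hMD, hC'def]
        _ = C' * D := (hC'D).symm
        _ = (star U * C * U) * (star U * M * U) := by rw [hMD, hC'def]
        _ = star U * (C * M) * U := by simp only [Matrix.mul_assoc]; rw [hUl]
    have h3 := congrArg (fun Y => U * Y * star U) h1
    simp only [Matrix.mul_assoc, hUl] at h3
    rw [hUU', Matrix.mul_one, Matrix.mul_one] at h3
    exact h3
  -- conclude B * C = C * B
  have h4 : S * (B * (S * (S * S))) = S * (S * (S * (B * S))) := by
    have h5 := hMC
    rw [hMdef, ← hS2] at h5
    simpa only [Matrix.mul_assoc] using h5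
  have h5 : B * (S * (S * S)) = S * (S * (B * S)) := hSu.mul_left_cancel h4
  have h6 : (B * (S * S)) * S = (S * (S * B)) * S := by
    simpa only [Matrix.mul_assoc] using h5
  have h7 : B * (S * S) = S * (S * B) := hSu.mul_right_cancel h6
  rw [← hS2]
  simpa only [Matrix.mul_assoc] using h7
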